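/- arXiv:2403.11787 — 3 statements merged into one kernel-verified Lean document; each statement's English description precedes it below -/
import Mathlib

section
/- Let $H : X \to Y$ be Fréchet differentiable on $B_\rho(x^\dagger)$, and suppose there exists a family of bounded linear operators $R_{H,x} : Y \to Y$ with $H'(x) = R_{H,x} H'(x^\dagger)$ and $\|R_{H,x} - I\| \le c_H \|x - x^\dagger\|$ for all $x \in B_\rho(x^\dagger)$. Then for any $x \in B_\rho(x^\dagger)$, setting $K_H = H'(x^\dagger)$, $\|H(x) - H(x^\dagger) - K_H(x - x^\dagger)\| \le \frac{c_H}{2} \|K_H(x - x^\dagger)\| \, \|x - x^\dagger\|$. -/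
open Metric

/-- Linearization error bound under the range invariance condition. -/
theorem stmt1 {X Y : Type*} [NormedAddCommGroup X] [InnerProductSpace ℝ X]
    [NormedAddCommGroup Y] [InnerProductSpace ℝ Y]
    (H : X → Y) (xdag : X) (ρ : ℝ) (cH : ℝ) (hcH : 0 < cH)
    (K : X →L[ℝ] Y) (R : X → Y →L[ℝ] Y)
    (hdiff : ∀ x ∈ closedBall xdag ρ,
      HasFDerivWithinAt H ((R x).comp K) (closedBall xdag ρ) x)
    (hRx : ∀ x ∈ closedBall xdag ρ,
      ‖R x - ContinuousLinearMap.id ℝ Y‖ ≤ cH * ‖x - xdag‖)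
    (hRdag : R xdag = ContinuousLinearMap.id ℝ Y) :
    ∀ x ∈ closedBall xdag ρ,
      ‖H x - H xdag - K (x - xdag)‖ ≤ cH / 2 * ‖K (x - xdag)‖ * ‖x - xdag‖ := by
  intro x hx
  set v := x - xdag with hv
  have hvρ : ‖v‖ ≤ ρ := by simpa [dist_eq_norm] using hx
  set γ : ℝ → X := fun t => xdag + t • v with hγ
  have hmaps : ∀ t ∈ Set.Icc (0:ℝ) 1, γ t ∈ closedBall xdag ρ := by
    intro t ht
    simp only [hγ, mem_closedBall, dist_eq_norm, add_sub_cancel_left, norm_smul,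
      Real.norm_eq_abs, abs_of_nonneg ht.1]
    calc t * ‖v‖ ≤ 1 * ‖v‖ := by
          exact mul_le_mul_of_nonneg_right ht.2 (norm_nonneg _)
      _ ≤ ρ := by simpa using hvρ
  have hγd : ∀ t : ℝ, HasDerivWithinAt γ v (Set.Icc 0 1) t := by
    intro t
    have : HasDerivAt γ v t := by
      simpa [hγ] using (hasDerivAt_id t).smul_const v |>.const_add xdag
    exact this.hasDerivWithinAt
  set g : ℝ → Y := fun t => H (γ t) - H xdag - t • (K v) with hg
  set C : ℝ := cH * ‖K v‖ * ‖v‖ with hC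
  have hC0 : 0 ≤ C := by positivity
  -- derivative of g within Icc 0 1
  have hgd : ∀ t ∈ Set.Icc (0:ℝ) 1,
      HasDerivWithinAt g ((R (γ t)) (K v) - K v) (Set.Icc 0 1) t := by
    intro t ht
    have h1 : HasDerivWithinAt (fun t => H (γ t)) ((R (γ t)) (K v)) (Set.Icc 0 1) t := by
      have := (hdiff (γ t) (hmaps t ht)).comp_hasDerivWithinAt t (hγd t)
        (fun s hs => hmaps s hs)
      exact this
    have h2 : HasDerivWithinAt (fun t : ℝ => t • (K v)) (K v) (Set.Icc 0 1) t := by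
      simpa using ((hasDerivAt_id t).smul_const (K v)).hasDerivWithinAt
    exact (h1.sub_const (H xdag)).sub h2
  have hgc : ContinuousOn g (Set.Icc 0 1) := fun t ht =>
    (hgd t ht).continuousWithinAt
  have hgd' : ∀ t ∈ Set.Ico (0:ℝ) 1,
      HasDerivWithinAt g ((R (γ t)) (K v) - K v) (Set.Ici t) t := by
    intro t ht
    exact (hgd t ⟨ht.1, ht.2.le⟩).mono_of_mem_nhdsWithin (Icc_mem_nhdsGE_of_mem ht)
  have hB : ∀ t : ℝ, HasDerivAt (fun t => C / 2 * t ^ 2) (C * t) t := by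
    intro t
    have : HasDerivAt (fun t : ℝ => C / 2 * t ^ 2) (C / 2 * (((2:ℕ):ℝ) * t ^ (2 - 1))) t :=
      ((hasDerivAt_pow 2 t).const_mul (C / 2))
    convert this using 1
    ring
  have bound : ∀ t ∈ Set.Ico (0:ℝ) 1, ‖(R (γ t)) (K v) - K v‖ ≤ C * t := by
    intro t ht
    have h1 : (R (γ t)) (K v) - K v = (R (γ t) - ContinuousLinearMap.id ℝ Y) (K v) := by
      simp
    rw [h1]
    calc ‖(R (γ t) - ContinuousLinearMap.id ℝ Y) (K v)‖
        ≤ ‖R (γ t) - ContinuousLinearMap.id ℝ Y‖ * ‖K v‖ :=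
          (R (γ t) - ContinuousLinearMap.id ℝ Y).le_opNorm _
      _ ≤ (cH * ‖γ t - xdag‖) * ‖K v‖ := by
          exact mul_le_mul_of_nonneg_right (hRx (γ t) (hmaps t ⟨ht.1, ht.2.le⟩))
            (norm_nonneg _)
      _ = C * t := by
          simp only [hγ, add_sub_cancel_left, norm_smul, Real.norm_eq_abs,
            abs_of_nonneg ht.1, hC]
          ring
  have h0 : ‖g 0‖ ≤ C / 2 * (0:ℝ) ^ 2 := by
    simp [hg, hγ]
  have key := image_norm_le_of_norm_deriv_right_le_deriv_boundary hgc hgd' h0 hB bound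
    (Set.right_mem_Icc.2 zero_le_one)
  have hg1 : g 1 = H x - H xdag - K v := by
    simp [hg, hγ, hv]
  rw [hg1] at key
  calc ‖H x - H xdag - K v‖ ≤ C / 2 * (1:ℝ) ^ 2 := key
    _ = cH / 2 * ‖K v‖ * ‖v‖ := by rw [hC]; ring
end

section
/- Let $\eta_j = \eta_0 j^{-\alpha}$ with $\eta_0 > 0$, $\alpha \in (0,1)$, and let $r \in [0,1)$ and $\beta \in [0,1]$ with $\alpha + \beta < 1$. Then for all $k \ge 2$: $\sum_{j=1}^{k-1} \frac{\eta_j}{(\sum_{\ell=j+1}^k \eta_\ell)^r} j^{-\beta} \le \eta_0^{1-r} B(1-r, 1-\alpha-\beta) \, k^{(1-r)(1-\alpha) - \beta}$, where $B(a,b) = \int_0^1 s^{a-1}(1-s)^{b-1} ds$ is the Beta function. -/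
open Finset MeasureTheory intervalIntegral

lemma half_integrable (a r : ℝ) (ha0 : 0 ≤ a) (ha1 : a < 1) (hr0 : 0 ≤ r) :
    IntervalIntegrable (fun s : ℝ => s ^ (-a) * (1 - s) ^ (-r)) volume 0 (1/2) := by
  rw [intervalIntegrable_iff_integrableOn_Ioc_of_le (by norm_num)]
  have hbound : IntervalIntegrable (fun s : ℝ => 2 ^ r * s ^ (-a)) volume 0 (1/2) :=
    (intervalIntegrable_rpow' (by linarith)).const_mul _
  rw [intervalIntegrable_iff_integrableOn_Ioc_of_le (by norm_num)] at hbound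
  refine hbound.mono' ?_ ?_
  · apply Measurable.aestronglyMeasurable
    fun_prop
  · filter_upwards [ae_restrict_mem measurableSet_Ioc] with s hs
    obtain ⟨hs0, hs2⟩ := hs
    have h1s : (1:ℝ)/2 ≤ 1 - s := by linarith
    have hga : 0 ≤ s ^ (-a) := Real.rpow_nonneg hs0.le _
    have hgr : 0 ≤ (1 - s) ^ (-r) := Real.rpow_nonneg (by linarith) _
    rw [Real.norm_eq_abs, abs_of_nonneg (mul_nonneg hga hgr)]
    have hle : (1 - s) ^ (-r) ≤ ((1:ℝ)/2) ^ (-r) :=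
      Real.rpow_le_rpow_of_nonpos (by norm_num) h1s (by linarith)
    have h2 : ((1:ℝ)/2) ^ (-r) = 2 ^ r := by
      rw [one_div, ← Real.rpow_neg_one]
      rw [← Real.rpow_mul (by norm_num)]
      norm_num
    calc s ^ (-a) * (1 - s) ^ (-r) ≤ s ^ (-a) * ((1:ℝ)/2) ^ (-r) :=
          mul_le_mul_of_nonneg_left hle hga
      _ = 2 ^ r * s ^ (-a) := by rw [h2]; ring

lemma g_integrable (a r : ℝ) (ha0 : 0 ≤ a) (ha1 : a < 1) (hr0 : 0 ≤ r) (hr1 : r < 1) :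
    IntervalIntegrable (fun s : ℝ => s ^ (-a) * (1 - s) ^ (-r)) volume 0 1 := by
  have h1 := half_integrable a r ha0 ha1 hr0
  have h2 := (half_integrable r a hr0 hr1 ha0).comp_sub_left 1
  norm_num at h2
  refine h1.trans (h2.symm.congr ?_)
  intro x _
  dsimp only
  ring

lemma Fcont (a r c u v : ℝ) (hu : 0 < u) (hv : v < c) :
    ContinuousOn (fun x : ℝ => x ^ (-a) * (c - x) ^ (-r)) (Set.Icc u v) := by
  intro x hx
  apply ContinuousAt.continuousWithinAt
  have hx0 : x ≠ 0 := ne_of_gt (lt_of_lt_of_le hu hx.1)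
  have hcx : c - x ≠ 0 := ne_of_gt (by linarith [hx.2] : (0:ℝ) < c - x)
  exact (continuousAt_id.rpow_const (Or.inl hx0)).mul
    (((continuous_const.sub continuous_id).continuousAt).rpow_const (Or.inl hcx))

lemma midpt (a r c j : ℝ) (ha : 0 ≤ a) (hr : 0 ≤ r) (hj : 1 ≤ j) (hjc : j ≤ c - 1) :
    j ^ (-a) * (c - j) ^ (-r) ≤ ∫ x in (j - 1/2)..(j + 1/2), x ^ (-a) * (c - x) ^ (-r) := by
  set F : ℝ → ℝ := fun x => x ^ (-a) * (c - x) ^ (-r) with hF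
  have hint1 : IntervalIntegrable F volume (j - 1/2) j :=
    (Fcont a r c (j - 1/2) j (by linarith) (by linarith)).intervalIntegrable_of_Icc
      (by linarith)
  have hint2 : IntervalIntegrable F volume j (j + 1/2) :=
    (Fcont a r c j (j + 1/2) (by linarith) (by linarith)).intervalIntegrable_of_Icc
      (by linarith)
  have key : ∀ t ∈ Set.Icc (0:ℝ) (1/2), 2 * F j ≤ F (j - t) + F (j + t) := by
    intro t ht
    obtain ⟨ht0, ht2⟩ := ht
    have hjt1 : (0:ℝ) < j - t := by linarith
    have hjt2 : (0:ℝ) < j + t := by linarith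
    have hcjt1 : (0:ℝ) < c - (j - t) := by linarith
    have hcjt2 : (0:ℝ) < c - (j + t) := by linarith
    have hj0 : (0:ℝ) < j := by linarith
    have hcj0 : (0:ℝ) < c - j := by linarith
    set p := F (j - t) with hp
    set q := F (j + t) with hq
    have hp0 : 0 ≤ p := mul_nonneg (Real.rpow_nonneg hjt1.le _) (Real.rpow_nonneg hcjt1.le _)
    have hq0 : 0 ≤ q := mul_nonneg (Real.rpow_nonneg hjt2.le _) (Real.rpow_nonneg hcjt2.le _)
    have hFj0 : 0 ≤ F j := mul_nonneg (Real.rpow_nonneg hj0.le _) (Real.rpow_nonneg hcj0.le _)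
    have hpq : F j ^ 2 ≤ p * q := by
      have e1 : p * q = ((j - t) * (j + t)) ^ (-a) * ((c - (j - t)) * (c - (j + t))) ^ (-r) := by
        rw [hp, hq, hF]
        dsimp only
        rw [Real.mul_rpow hjt1.le hjt2.le, Real.mul_rpow hcjt1.le hcjt2.le]
        ring
      have e2 : F j ^ 2 = (j * j) ^ (-a) * ((c - j) * (c - j)) ^ (-r) := by
        rw [hF]
        dsimp only
        rw [Real.mul_rpow hj0.le hj0.le, Real.mul_rpow hcj0.le hcj0.le]
        ring
      rw [e1, e2]
      have m1 : ((j * j) : ℝ) ^ (-a) ≤ ((j - t) * (j + t)) ^ (-a) := by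
        apply Real.rpow_le_rpow_of_nonpos (by nlinarith) (by nlinarith) (by linarith)
      have m2 : (((c - j) * (c - j)) : ℝ) ^ (-r) ≤ ((c - (j - t)) * (c - (j + t))) ^ (-r) := by
        apply Real.rpow_le_rpow_of_nonpos (by nlinarith) (by nlinarith) (by linarith)
      exact mul_le_mul m1 m2 (Real.rpow_nonneg (by nlinarith) _)
        (Real.rpow_nonneg (by positivity) _)
    -- from F j ^ 2 ≤ p * q and nonneg, get 2 * F j ≤ p + q
    have hs : F j ≤ Real.sqrt p * Real.sqrt q := by
      rw [← Real.sqrt_mul_self hFj0, ← Real.sqrt_mul hp0]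
      apply Real.sqrt_le_sqrt
      nlinarith
    have h2 : 2 * (Real.sqrt p * Real.sqrt q) ≤ p + q := by
      nlinarith [Real.sq_sqrt hp0, Real.sq_sqrt hq0, sq_nonneg (Real.sqrt p - Real.sqrt q)]
    nlinarith
  have hGc : ContinuousOn (fun t => F (j - t) + F (j + t)) (Set.Icc (0:ℝ) (1/2)) := by
    apply ContinuousOn.add
    · apply (Fcont a r c (j - 1/2) j (by linarith) (by linarith)).comp
        ((continuous_const.sub continuous_id).continuousOn)
      intro t ht
      simp only [Set.mem_Icc] at ht ⊢
      constructor <;> [skip; skip] <;> dsimp <;> linarith [ht.1, ht.2]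
    · apply (Fcont a r c j (j + 1/2) (by linarith) (by linarith)).comp
        ((continuous_const.add continuous_id).continuousOn)
      intro t ht
      simp only [Set.mem_Icc] at ht ⊢
      constructor <;> dsimp <;> linarith [ht.1, ht.2]
  calc F j = ∫ t in (0:ℝ)..(1/2), 2 * F j := by
        rw [intervalIntegral.integral_const, smul_eq_mul]
        ring
    _ ≤ ∫ t in (0:ℝ)..(1/2), (F (j - t) + F (j + t)) := by
        apply intervalIntegral.integral_mono_on (by norm_num)
          (intervalIntegrable_const) (hGc.intervalIntegrable_of_Icc (by norm_num)) key
    _ = (∫ t in (0:ℝ)..(1/2), F (j - t)) + ∫ t in (0:ℝ)..(1/2), F (j + t) := by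
        apply intervalIntegral.integral_add
        · have := hint1.comp_sub_left j
          simpa using this.symm
        · have := hint2.comp_add_left j
          simpa using this
    _ = (∫ x in (j - 1/2)..j, F x) + ∫ x in j..(j + 1/2), F x := by
        rw [intervalIntegral.integral_comp_sub_left F j, intervalIntegral.integral_comp_add_left F j]
        norm_num
    _ = ∫ x in (j - 1/2)..(j + 1/2), F x :=
        intervalIntegral.integral_add_adjacent_intervals hint1 hint2

/-- The Euler Beta function `B(a,b) = ∫_0^1 s^(a-1) (1-s)^(b-1) ds`. -/
noncomputable def Beta (a b : ℝ) : ℝ := ∫ s in (0 : ℝ)..1, s ^ (a - 1) * (1 - s) ^ (b - 1)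

lemma beta_symm (A B : ℝ) : Beta A B = Beta B A := by
  unfold Beta
  have h := intervalIntegral.integral_comp_sub_left
    (fun s : ℝ => s ^ (B - 1) * (1 - s) ^ (A - 1)) 1 (a := 0) (b := 1)
  norm_num at h
  rw [← h]
  apply intervalIntegral.integral_congr
  intro x _
  dsimp only
  ring


lemma int_est (a r K : ℝ) (ha0 : 0 ≤ a) (ha1 : a < 1) (hr0 : 0 ≤ r) (hr1 : r < 1)
    (hK : 2 ≤ K) :
    (∫ x in (1/2 : ℝ)..(K - 1/2), x ^ (-a) * (K - x) ^ (-r))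
      ≤ K ^ (1 - a - r) * Beta (1 - r) (1 - a) := by
  have hK0 : (0:ℝ) < K := by linarith
  set u : ℝ := 1 / (2 * K) with hu
  have hu0 : 0 < u := by positivity
  have hu2 : u ≤ 1/2 := by
    rw [hu]
    rw [div_le_div_iff₀ (by positivity) (by norm_num)]
    linarith
  have hKu : K * u = 1/2 := by
    rw [hu]; field_simp
  have hKu' : K * (1 - u) = K - 1/2 := by
    rw [mul_sub, hKu, mul_one]
  have hsub := intervalIntegral.smul_integral_comp_mul_left
    (fun x : ℝ => x ^ (-a) * (K - x) ^ (-r)) K (a := u) (b := 1 - u)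
  rw [hKu, hKu'] at hsub
  rw [← hsub]
  have hcongr : ∫ s in u..(1 - u), (fun x : ℝ => x ^ (-a) * (K - x) ^ (-r)) (K * s)
      = ∫ s in u..(1 - u), K ^ (-a - r) * (s ^ (-a) * (1 - s) ^ (-r)) := by
    apply intervalIntegral.integral_congr
    intro s hs
    rw [Set.uIcc_of_le (by linarith)] at hs
    have hs0 : 0 < s := lt_of_lt_of_le hu0 hs.1
    have hs1 : 0 < 1 - s := by
      have := hs.2; linarith [hu0]
    dsimp only
    rw [show K - K * s = K * (1 - s) by ring]
    rw [Real.mul_rpow hK0.le hs0.le, Real.mul_rpow hK0.le hs1.le]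
    rw [show K ^ (-a) * s ^ (-a) * (K ^ (-r) * (1 - s) ^ (-r))
      = K ^ (-a) * K ^ (-r) * (s ^ (-a) * (1 - s) ^ (-r)) by ring,
      ← Real.rpow_add hK0]
    ring_nf
  rw [hcongr, intervalIntegral.integral_const_mul, smul_eq_mul]
  have hmono : (∫ s in u..(1 - u), s ^ (-a) * (1 - s) ^ (-r))
      ≤ ∫ s in (0:ℝ)..1, s ^ (-a) * (1 - s) ^ (-r) := by
    apply intervalIntegral.integral_mono_interval hu0.le (by linarith) (by linarith)
    · filter_upwards [ae_restrict_mem measurableSet_Ioc] with s hs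
      exact mul_nonneg (Real.rpow_nonneg hs.1.le _) (Real.rpow_nonneg (by linarith [hs.2]) _)
    · exact g_integrable a r ha0 ha1 hr0 hr1
  have hbeta : (∫ s in (0:ℝ)..1, s ^ (-a) * (1 - s) ^ (-r)) = Beta (1 - r) (1 - a) := by
    rw [beta_symm]
    unfold Beta
    apply intervalIntegral.integral_congr
    intro s _
    norm_num
  have hKpow : K * K ^ (-a - r) = K ^ (1 - a - r) := by
    nth_rewrite 1 [← Real.rpow_one K]
    rw [← Real.rpow_add hK0]
    ring_nf
  calc K * (K ^ (-a - r) * ∫ s in u..(1 - u), s ^ (-a) * (1 - s) ^ (-r))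
      ≤ K * (K ^ (-a - r) * ∫ s in (0:ℝ)..1, s ^ (-a) * (1 - s) ^ (-r)) := by
        apply mul_le_mul_of_nonneg_left (mul_le_mul_of_nonneg_left hmono
          (Real.rpow_nonneg hK0.le _)) hK0.le
    _ = K ^ (1 - a - r) * Beta (1 - r) (1 - a) := by
        rw [hbeta, ← mul_assoc, hKpow]

/-- Weighted sum estimate with the Beta function. -/
theorem stmt6 (η0 α r β : ℝ) (hη0 : 0 < η0) (hα : α ∈ Set.Ioo (0 : ℝ) 1)
    (hr : r ∈ Set.Ico (0 : ℝ) 1) (hβ : β ∈ Set.Icc (0 : ℝ) 1) (hαβ : α + β < 1)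
    (k : ℕ) (hk : 2 ≤ k) :
    ∑ j ∈ Icc 1 (k - 1),
        (η0 * (j : ℝ) ^ (-α)) / (∑ l ∈ Icc (j + 1) k, η0 * (l : ℝ) ^ (-α)) ^ r
          * (j : ℝ) ^ (-β)
      ≤ η0 ^ (1 - r) * Beta (1 - r) (1 - α - β) * (k : ℝ) ^ ((1 - r) * (1 - α) - β) := by
  obtain ⟨hα0, hα1⟩ := hα
  obtain ⟨hr0, hr1⟩ := hr
  obtain ⟨hβ0, hβ1⟩ := hβ
  have hk1 : 1 ≤ k := by omega
  have hK2 : (2:ℝ) ≤ (k:ℝ) := by exact_mod_cast hk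
  set K : ℝ := (k : ℝ) with hKdef
  have hK0 : (0:ℝ) < K := by linarith
  set a : ℝ := α + β with hadef
  have ha0 : 0 < a := by rw [hadef]; linarith
  have ha1 : a < 1 := hαβ
  set C : ℝ := η0 ^ (1 - r) * K ^ (α * r) with hCdef
  have hC0 : 0 ≤ C := mul_nonneg (Real.rpow_nonneg hη0.le _) (Real.rpow_nonneg hK0.le _)
  have hKm1 : ((k - 1 : ℕ) : ℝ) = K - 1 := by
    rw [hKdef]; push_cast [Nat.cast_sub hk1]; ring
  -- Step A+B : termwise bound
  have hterm : ∀ j ∈ Icc 1 (k-1),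
      (η0 * (j : ℝ) ^ (-α)) / (∑ l ∈ Icc (j + 1) k, η0 * (l : ℝ) ^ (-α)) ^ r
          * (j : ℝ) ^ (-β)
        ≤ C * ∫ x in ((j:ℝ) - 1/2)..((j:ℝ) + 1/2), x ^ (-a) * (K - x) ^ (-r) := by
    intro j hj
    rw [Finset.mem_Icc] at hj
    obtain ⟨hj1, hj2⟩ := hj
    have hjk : j ≤ k := by omega
    set J : ℝ := (j : ℝ) with hJdef
    have hJ1 : 1 ≤ J := by rw [hJdef]; exact_mod_cast hj1
    have hJ0 : 0 < J := by linarith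
    have hJK : J ≤ K - 1 := by
      rw [← hKm1, hJdef]; exact_mod_cast hj2
    have hKJ : 0 < K - J := by linarith
    set S : ℝ := ∑ l ∈ Icc (j + 1) k, η0 * (l : ℝ) ^ (-α) with hSdef
    set D : ℝ := η0 * ((K - J) * K ^ (-α)) with hDdef
    have hD0 : 0 < D := by
      rw [hDdef]
      have := Real.rpow_pos_of_pos hK0 (-α)
      positivity
    have hDS : D ≤ S := by
      have hcard : (Icc (j+1) k).card = k - j := by rw [Nat.card_Icc]; omega
      have hle : ∀ l ∈ Icc (j+1) k, η0 * K ^ (-α) ≤ η0 * (l:ℝ) ^ (-α) := by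
        intro l hl
        rw [Finset.mem_Icc] at hl
        have hl0 : (0:ℝ) < (l:ℝ) := by
          have : 1 ≤ l := by omega
          exact_mod_cast Nat.lt_of_lt_of_le Nat.zero_lt_one (by exact_mod_cast this)
        have hlK : (l:ℝ) ≤ K := by rw [hKdef]; exact_mod_cast hl.2
        exact mul_le_mul_of_nonneg_left
          (Real.rpow_le_rpow_of_nonpos hl0 hlK (by linarith)) hη0.le
      have hsum := Finset.card_nsmul_le_sum (Icc (j+1) k) _ _ hle
      rw [hcard] at hsum
      have hcast : ((k - j : ℕ) : ℝ) = K - J := by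
        rw [hKdef, hJdef]; push_cast [Nat.cast_sub hjk]; ring
      calc D = ((k - j : ℕ) : ℝ) * (η0 * K ^ (-α)) := by rw [hcast, hDdef]; ring
        _ = (k - j : ℕ) • (η0 * K ^ (-α)) := by rw [nsmul_eq_mul]
        _ ≤ S := hsum
    have hDr : 0 < D ^ r := Real.rpow_pos_of_pos hD0 r
    have hSr : D ^ r ≤ S ^ r := Real.rpow_le_rpow hD0.le hDS hr0
    have hnum : 0 ≤ η0 * J ^ (-α) := mul_nonneg hη0.le (Real.rpow_nonneg hJ0.le _)
    have step1 : (η0 * J ^ (-α)) / S ^ r * J ^ (-β)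
        ≤ (η0 * J ^ (-α)) / D ^ r * J ^ (-β) := by
      apply mul_le_mul_of_nonneg_right _ (Real.rpow_nonneg hJ0.le _)
      exact div_le_div_of_nonneg_left hnum hDr hSr
    have step2 : (η0 * J ^ (-α)) / D ^ r * J ^ (-β) = C * (J ^ (-a) * (K - J) ^ (-r)) := by
      rw [div_mul_eq_mul_div, div_eq_iff hDr.ne']
      have hDr_eq : D ^ r = η0 ^ r * ((K - J) ^ r * K ^ (-(α * r))) := by
        rw [hDdef, Real.mul_rpow hη0.le (by positivity),
          Real.mul_rpow hKJ.le (Real.rpow_nonneg hK0.le _),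
          ← Real.rpow_mul hK0.le, neg_mul]
      rw [hDr_eq, hCdef]
      rw [show η0 ^ (1-r) * K ^ (α*r) * (J ^ (-a) * (K-J) ^ (-r))
            * (η0 ^ r * ((K-J) ^ r * K ^ (-(α*r))))
          = ((η0 ^ (1-r) * η0 ^ r) * (K ^ (α*r) * K ^ (-(α*r))))
            * (((K-J) ^ (-r) * (K-J) ^ r) * J ^ (-a)) by ring]
      rw [← Real.rpow_add hη0, ← Real.rpow_add hK0, ← Real.rpow_add hKJ]
      norm_num
      rw [hadef, show -(α+β) = -α + -β by ring, Real.rpow_add hJ0]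
      ring
    calc (η0 * J ^ (-α)) / S ^ r * J ^ (-β)
        ≤ (η0 * J ^ (-α)) / D ^ r * J ^ (-β) := step1
      _ = C * (J ^ (-a) * (K - J) ^ (-r)) := step2
      _ ≤ C * ∫ x in (J - 1/2)..(J + 1/2), x ^ (-a) * (K - x) ^ (-r) :=
          mul_le_mul_of_nonneg_left (midpt a r K J ha0.le hr0 hJ1 hJK) hC0
  -- Step C : sum of integrals
  have stepC : ∑ j ∈ Icc 1 (k-1),
      (∫ x in ((j:ℝ) - 1/2)..((j:ℝ) + 1/2), x ^ (-a) * (K - x) ^ (-r))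
      = ∫ x in (1/2 : ℝ)..(K - 1/2), x ^ (-a) * (K - x) ^ (-r) := by
    have hicc : Icc 1 (k-1) = Ico 1 k := by rw [← Finset.Ico_add_one_right_eq_Icc]; congr 1; omega
    rw [hicc, Finset.sum_Ico_eq_sum_range]
    have hint : ∀ i, i < k - 1 → IntervalIntegrable (fun x : ℝ => x ^ (-a) * (K - x) ^ (-r))
        volume ((i:ℝ) + 1/2) (((i+1:ℕ):ℝ) + 1/2) := by
      intro i hi
      have hik : (i:ℝ) + 2 ≤ K := by
        rw [hKdef]; exact_mod_cast (by omega : i + 2 ≤ k)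
      apply (Fcont a r K ((i:ℝ) + 1/2) (((i+1:ℕ):ℝ) + 1/2) (by positivity)
        (by push_cast; linarith)).intervalIntegrable_of_Icc (by push_cast; linarith)
    have hadj := intervalIntegral.sum_integral_adjacent_intervals (μ := volume)
      (a := fun i : ℕ => (i:ℝ) + 1/2) (f := fun x : ℝ => x ^ (-a) * (K - x) ^ (-r))
      (n := k - 1) (by intro i hi; simpa using hint i hi)
    calc ∑ i ∈ range (k-1), ∫ x in (((1+i : ℕ):ℝ) - 1/2)..(((1+i : ℕ):ℝ) + 1/2),
            x ^ (-a) * (K - x) ^ (-r)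
        = ∑ i ∈ range (k-1), ∫ x in ((i:ℝ) + 1/2)..(((i+1:ℕ):ℝ) + 1/2),
            x ^ (-a) * (K - x) ^ (-r) := by
          apply Finset.sum_congr rfl
          intro i _
          congr 1 <;> push_cast <;> ring
      _ = ∫ x in (((0:ℕ):ℝ) + 1/2)..(((k-1:ℕ):ℝ) + 1/2), x ^ (-a) * (K - x) ^ (-r) := by
          rw [← hadj]
      _ = ∫ x in (1/2 : ℝ)..(K - 1/2), x ^ (-a) * (K - x) ^ (-r) := by
          have h0 : ((0:ℕ):ℝ) + 1/2 = (1:ℝ)/2 := by norm_num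
          have h1 : ((k-1:ℕ):ℝ) + 1/2 = K - 1/2 := by rw [hKm1]; ring
          rw [h0, h1]
  -- assemble
  calc ∑ j ∈ Icc 1 (k - 1),
        (η0 * (j : ℝ) ^ (-α)) / (∑ l ∈ Icc (j + 1) k, η0 * (l : ℝ) ^ (-α)) ^ r
          * (j : ℝ) ^ (-β)
      ≤ ∑ j ∈ Icc 1 (k-1),
          C * ∫ x in ((j:ℝ) - 1/2)..((j:ℝ) + 1/2), x ^ (-a) * (K - x) ^ (-r) :=
        Finset.sum_le_sum hterm
    _ = C * ∑ j ∈ Icc 1 (k-1),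
          ∫ x in ((j:ℝ) - 1/2)..((j:ℝ) + 1/2), x ^ (-a) * (K - x) ^ (-r) :=
        (Finset.mul_sum _ _ _).symm
    _ = C * ∫ x in (1/2 : ℝ)..(K - 1/2), x ^ (-a) * (K - x) ^ (-r) := by rw [stepC]
    _ ≤ C * (K ^ (1 - a - r) * Beta (1 - r) (1 - a)) :=
        mul_le_mul_of_nonneg_left (int_est a r K ha0.le ha1 hr0 hr1 hK2) hC0
    _ = η0 ^ (1 - r) * Beta (1 - r) (1 - α - β) * K ^ ((1 - r) * (1 - α) - β) := by
        rw [hCdef, hadef]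
        rw [show (1 : ℝ) - (α + β) = 1 - α - β by ring]
        rw [show η0 ^ (1-r) * K ^ (α*r) * (K ^ (1 - α - β - r) * Beta (1-r) (1-α-β))
          = η0 ^ (1-r) * Beta (1-r) (1-α-β) * (K ^ (α*r) * K ^ (1 - α - β - r)) by ring]
        rw [← Real.rpow_add hK0]
        congr 2
        ring
end

section
/- Let $\eta_j = \eta_0 j^{-\alpha}$ with $\eta_0 \le 1$ and $\alpha \in (0,1)$, and let $\phi_j = \min\big( (2e)^{-1/2} (\sum_{i=j+1}^k \eta_i)^{-1/2}, 1 \big)$ for $j < k$ and $\phi_k = 1$. Let $\gamma = \min((1+2\nu)(1-\alpha), 1)$ and $\beta = \gamma - (1-\alpha)$ for $\nu \in (0, 1/2)$, and $\zeta = 1 - \alpha - \gamma/2 > 0$. Then $\sum_{j=1}^k \eta_j \phi_j j^{-\gamma/2} \le 2^{\beta/2 - 1} \eta_0^{1/2} (B(1/2, \zeta) + 2)(k+1)^{-\beta/2}$, where $B$ is the Beta function. -/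
open Finset Real intervalIntegral MeasureTheory

lemma aux_convexOn {a b K : ℝ} (ha : 0 ≤ a) (hb : 0 ≤ b) :
    ConvexOn ℝ (Set.Ioo (0:ℝ) K) (fun x => x ^ (-a) * (K - x) ^ (-b)) := by
  have hlc := strictConcaveOn_log_Ioi.concaveOn
  have h1 : ConvexOn ℝ (Set.Ioo (0:ℝ) K) (fun x => a * (-Real.log x)) := by
    refine ⟨convex_Ioo _ _, fun x hx y hy p q hp hq hpq => ?_⟩
    have := hlc.2 (Set.mem_Ioi.2 hx.1) (Set.mem_Ioi.2 hy.1) hp hq hpq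
    simp only [smul_eq_mul] at this ⊢
    nlinarith [this, ha]
  have h2 : ConvexOn ℝ (Set.Ioo (0:ℝ) K) (fun x => b * (-Real.log (K - x))) := by
    refine ⟨convex_Ioo _ _, fun x hx y hy p q hp hq hpq => ?_⟩
    have hx' : K - x ∈ Set.Ioi (0:ℝ) := Set.mem_Ioi.2 (by linarith [hx.2])
    have hy' : K - y ∈ Set.Ioi (0:ℝ) := Set.mem_Ioi.2 (by linarith [hy.2])
    have := hlc.2 hx' hy' hp hq hpq
    simp only [smul_eq_mul] at this ⊢
    have he : p * (K - x) + q * (K - y) = K - (p * x + q * y) := by linear_combination K * hpq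
    rw [he] at this
    nlinarith [this, hb]
  have h3 := h1.add h2
  refine ⟨convex_Ioo _ _, fun x hx y hy p q hp hq hpq => ?_⟩
  have hmem : p • x + q • y ∈ Set.Ioo (0:ℝ) K := (convex_Ioo (0:ℝ) K) hx hy hp hq hpq
  have he : ∀ z ∈ Set.Ioo (0:ℝ) K,
      z ^ (-a) * (K - z) ^ (-b)
        = Real.exp (a * (-Real.log z) + b * (-Real.log (K - z))) := by
    intro z hz
    rw [Real.exp_add, Real.rpow_def_of_pos hz.1, Real.rpow_def_of_pos (by linarith [hz.2] : (0:ℝ) < K - z)]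
    ring_nf
  simp only [smul_eq_mul] at *
  rw [he _ hmem, he _ hx, he _ hy]
  calc Real.exp (a * (-Real.log (p * x + q * y)) + b * (-Real.log (K - (p * x + q * y))))
      ≤ Real.exp (p * (a * (-Real.log x) + b * (-Real.log (K - x)))
          + q * (a * (-Real.log y) + b * (-Real.log (K - y)))) := by
        apply Real.exp_le_exp.2
        have := h3.2 hx hy hp hq hpq
        simpa [smul_eq_mul] using this
    _ ≤ p * Real.exp (a * (-Real.log x) + b * (-Real.log (K - x)))
          + q * Real.exp (a * (-Real.log y) + b * (-Real.log (K - y))) := by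
        have := convexOn_exp.2 (Set.mem_univ (a * (-Real.log x) + b * (-Real.log (K - x))))
          (Set.mem_univ (a * (-Real.log y) + b * (-Real.log (K - y)))) hp hq hpq
        simpa [smul_eq_mul] using this

lemma midpoint_le_integral {f : ℝ → ℝ} {c : ℝ}
    (hcv : ConvexOn ℝ (Set.Icc (c - 2⁻¹) (c + 2⁻¹)) f)
    (hct : ContinuousOn f (Set.Icc (c - 2⁻¹) (c + 2⁻¹))) :
    f c ≤ ∫ x in (c - 2⁻¹)..(c + 2⁻¹), f x := by
  have hle : c - 2⁻¹ ≤ c + 2⁻¹ := by linarith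
  have huIcc : Set.uIcc (c - 2⁻¹) (c + 2⁻¹) = Set.Icc (c - 2⁻¹) (c + 2⁻¹) := Set.uIcc_of_le hle
  have hint : IntervalIntegrable f MeasureTheory.volume (c - 2⁻¹) (c + 2⁻¹) :=
    (huIcc ▸ hct).intervalIntegrable
  have hintL : IntervalIntegrable f MeasureTheory.volume (c - 2⁻¹) c :=
    hint.mono_set (by rw [huIcc, Set.uIcc_of_le (by linarith : c - 2⁻¹ ≤ c)]
                      exact Set.Icc_subset_Icc le_rfl (by linarith))
  have hintR : IntervalIntegrable f MeasureTheory.volume c (c + 2⁻¹) :=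
    hint.mono_set (by rw [huIcc, Set.uIcc_of_le (by linarith : c ≤ c + 2⁻¹)]
                      exact Set.Icc_subset_Icc (by linarith) le_rfl)
  have hsplit : (∫ x in (c - 2⁻¹)..(c + 2⁻¹), f x)
      = (∫ x in (c - 2⁻¹)..c, f x) + ∫ x in c..(c + 2⁻¹), f x :=
    (integral_add_adjacent_intervals hintL hintR).symm
  have hL : (∫ x in (c - 2⁻¹)..c, f x) = ∫ t in (0:ℝ)..2⁻¹, f (c - t) := by
    rw [integral_comp_sub_left f c, sub_zero]
  have hR : (∫ x in c..(c + 2⁻¹), f x) = ∫ t in (0:ℝ)..2⁻¹, f (c + t) := by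
    rw [integral_comp_add_left f c, add_zero]
  have hiL : IntervalIntegrable (fun t => f (c - t)) MeasureTheory.volume 0 2⁻¹ := by
    have := hintL.comp_sub_left c
    simpa using this.symm
  have hiR : IntervalIntegrable (fun t => f (c + t)) MeasureTheory.volume 0 2⁻¹ := by
    have := hintR.comp_add_left c
    simpa using this
  have hpt : ∀ t ∈ Set.Icc (0:ℝ) 2⁻¹, 2 * f c ≤ f (c - t) + f (c + t) := by
    intro t ht
    have hmx : c - t ∈ Set.Icc (c - 2⁻¹) (c + 2⁻¹) := by
      constructor <;> [linarith [ht.2]; linarith [ht.1]]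
    have hmy : c + t ∈ Set.Icc (c - 2⁻¹) (c + 2⁻¹) := by
      constructor <;> [linarith [ht.1]; linarith [ht.2]]
    have := hcv.2 hmx hmy (by norm_num : (0:ℝ) ≤ 2⁻¹) (by norm_num : (0:ℝ) ≤ 2⁻¹) (by norm_num)
    simp only [smul_eq_mul] at this
    have he : 2⁻¹ * (c - t) + 2⁻¹ * (c + t) = c := by ring
    rw [he] at this
    linarith
  have hmono : (∫ t in (0:ℝ)..2⁻¹, 2 * f c) ≤ ∫ t in (0:ℝ)..2⁻¹, (f (c - t) + f (c + t)) := by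
    apply integral_mono_on (by norm_num) (intervalIntegrable_const) (hiL.add hiR) hpt
  have hconst : (∫ t in (0:ℝ)..2⁻¹, 2 * f c) = f c := by
    rw [intervalIntegral.integral_const]; ring_nf
  have hadd : (∫ t in (0:ℝ)..2⁻¹, (f (c - t) + f (c + t)))
      = (∫ t in (0:ℝ)..2⁻¹, f (c - t)) + ∫ t in (0:ℝ)..2⁻¹, f (c + t) :=
    integral_add hiL hiR
  rw [hsplit, hL, hR]
  calc f c = ∫ t in (0:ℝ)..2⁻¹, 2 * f c := hconst.symm
    _ ≤ _ := hmono
    _ = _ := hadd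

lemma sum_le_int {k : ℕ} (hk : 1 ≤ k) {a : ℝ} (ha : 0 < a) (ha1 : a < 1) :
    ∑ j ∈ Finset.Icc 1 (k-1), ((j:ℝ) ^ (-a) * ((k:ℝ) - (j:ℝ)) ^ (-(1/2:ℝ)))
      ≤ ∫ x in (0:ℝ)..(k:ℝ), x ^ (-a) * ((k:ℝ) - x) ^ (-(1/2:ℝ)) := by
  set f : ℝ → ℝ := fun x => x ^ (-a) * ((k:ℝ) - x) ^ (-(1/2:ℝ)) with hf
  have hk1 : (1:ℝ) ≤ (k:ℝ) := by exact_mod_cast hk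
  have hkpos : (0:ℝ) < (k:ℝ) := by linarith
  -- continuity on compact subsets of (0, k)
  have hct : ∀ u v : ℝ, 0 < u → v < (k:ℝ) → ContinuousOn f (Set.Icc u v) := by
    intro u v hu hv
    apply ContinuousOn.mul
    · exact continuousOn_id.rpow_const (fun x hx => Or.inl (ne_of_gt (lt_of_lt_of_le hu hx.1)))
    · exact ((continuous_const.sub continuous_id).continuousOn).rpow_const
        (fun x hx => Or.inl (ne_of_gt (by linarith [hx.2] : (0:ℝ) < (k:ℝ) - x)))
  -- integrability on [0, k]
  have h05 : IntervalIntegrable f volume 0 ((k:ℝ)/2) := by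
    apply IntervalIntegrable.mul_continuousOn (intervalIntegrable_rpow' (by linarith : (-1:ℝ) < -a))
    rw [Set.uIcc_of_le (by linarith : (0:ℝ) ≤ (k:ℝ)/2)]
    exact ((continuous_const.sub continuous_id).continuousOn).rpow_const
      (fun x hx => Or.inl (ne_of_gt (by linarith [hx.2] : (0:ℝ) < (k:ℝ) - x)))
  have h5k : IntervalIntegrable f volume ((k:ℝ)/2) (k:ℝ) := by
    have hg := (intervalIntegrable_rpow' (by norm_num : (-1:ℝ) < -(1/2:ℝ))
        (a := 0) (b := (k:ℝ)/2)).comp_sub_left (k:ℝ)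
    rw [show (k:ℝ) - (k:ℝ)/2 = (k:ℝ)/2 by ring, sub_zero] at hg
    apply IntervalIntegrable.continuousOn_mul hg.symm
    rw [Set.uIcc_of_le (by linarith : (k:ℝ)/2 ≤ (k:ℝ))]
    exact continuousOn_id.rpow_const
      (fun x hx => Or.inl (ne_of_gt (lt_of_lt_of_le (by linarith : (0:ℝ) < (k:ℝ)/2) hx.1)))
  have hint0k : IntervalIntegrable f volume 0 (k:ℝ) := h05.trans h5k
  -- termwise midpoint bound
  have hterm : ∀ j ∈ Finset.Icc 1 (k-1),
      (j:ℝ) ^ (-a) * ((k:ℝ) - (j:ℝ)) ^ (-(1/2:ℝ)) ≤ ∫ x in ((j:ℝ) - 2⁻¹)..((j:ℝ) + 2⁻¹), f x := by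
    intro j hj
    rw [Finset.mem_Icc] at hj
    have hj1 : (1:ℝ) ≤ (j:ℝ) := by exact_mod_cast hj.1
    have hjk : (j:ℝ) + 1 ≤ (k:ℝ) := by exact_mod_cast (by omega : j + 1 ≤ k)
    have hsub : Set.Icc ((j:ℝ) - 2⁻¹) ((j:ℝ) + 2⁻¹) ⊆ Set.Ioo (0:ℝ) (k:ℝ) := by
      intro x hx
      exact ⟨by linarith [hx.1], by linarith [hx.2]⟩
    exact midpoint_le_integral
      ((aux_convexOn ha.le (by norm_num : (0:ℝ) ≤ 1/2)).subset hsub (convex_Icc _ _))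
      (hct _ _ (by linarith) (by linarith))
  -- sum the integrals over adjacent intervals
  have hadj : ∑ i ∈ range (k-1), (∫ x in (((i:ℝ) + 2⁻¹))..(((i+1:ℕ):ℝ) + 2⁻¹), f x)
      = ∫ x in (2⁻¹:ℝ)..(((k-1:ℕ):ℝ) + 2⁻¹), f x := by
    have := sum_integral_adjacent_intervals (f := f) (μ := volume)
      (a := fun i : ℕ => (i:ℝ) + 2⁻¹) (n := k-1) ?_
    · simpa using this
    · intro i hi
      have hle : ((i:ℝ) + 2⁻¹) ≤ ((i+1:ℕ):ℝ) + 2⁻¹ := by push_cast; linarith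
      apply ContinuousOn.intervalIntegrable
      rw [Set.uIcc_of_le hle]
      push_cast
      apply hct _ _ (by positivity)
      have : (i:ℝ) + 1 + 1 ≤ (k:ℝ) := by exact_mod_cast (by omega : i + 1 + 1 ≤ k)
      linarith
  have hknat : ((k-1:ℕ):ℝ) = (k:ℝ) - 1 := by
    push_cast [hk]
    ring
  -- final comparison with the full integral
  have i2 : IntervalIntegrable f volume 2⁻¹ ((k:ℝ) - 2⁻¹) := by
    apply hint0k.mono_set
    rw [Set.uIcc_of_le (by linarith : (2⁻¹:ℝ) ≤ (k:ℝ) - 2⁻¹), Set.uIcc_of_le hkpos.le]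
    exact Set.Icc_subset_Icc (by norm_num) (by linarith)
  have i1 : IntervalIntegrable f volume 0 2⁻¹ := by
    apply hint0k.mono_set
    rw [Set.uIcc_of_le (by norm_num : (0:ℝ) ≤ 2⁻¹), Set.uIcc_of_le hkpos.le]
    exact Set.Icc_subset_Icc le_rfl (by linarith)
  have i3 : IntervalIntegrable f volume ((k:ℝ) - 2⁻¹) (k:ℝ) := by
    apply hint0k.mono_set
    rw [Set.uIcc_of_le (by linarith : (k:ℝ) - 2⁻¹ ≤ (k:ℝ)), Set.uIcc_of_le hkpos.le]
    exact Set.Icc_subset_Icc (by linarith) le_rfl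
  have hsplit1 : (∫ x in (0:ℝ)..((k:ℝ) - 2⁻¹), f x) + ∫ x in ((k:ℝ) - 2⁻¹)..(k:ℝ), f x
      = ∫ x in (0:ℝ)..(k:ℝ), f x :=
    integral_add_adjacent_intervals (i1.trans i2) i3
  have hsplit2 : (∫ x in (0:ℝ)..(2⁻¹:ℝ), f x) + ∫ x in (2⁻¹:ℝ)..((k:ℝ) - 2⁻¹), f x
      = ∫ x in (0:ℝ)..((k:ℝ) - 2⁻¹), f x :=
    integral_add_adjacent_intervals i1 i2
  have hnn1 : (0:ℝ) ≤ ∫ x in (0:ℝ)..(2⁻¹:ℝ), f x := by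
    apply intervalIntegral.integral_nonneg (by norm_num)
    intro x hx
    exact mul_nonneg (Real.rpow_nonneg hx.1 _) (Real.rpow_nonneg (by linarith [hx.2]) _)
  have hnn3 : (0:ℝ) ≤ ∫ x in ((k:ℝ) - 2⁻¹)..(k:ℝ), f x := by
    apply intervalIntegral.integral_nonneg (by linarith)
    intro x hx
    exact mul_nonneg (Real.rpow_nonneg (by linarith [hx.1]) _) (Real.rpow_nonneg (by linarith [hx.2]) _)
  calc ∑ j ∈ Finset.Icc 1 (k-1), ((j:ℝ) ^ (-a) * ((k:ℝ) - (j:ℝ)) ^ (-(1/2:ℝ)))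
      ≤ ∑ j ∈ Finset.Icc 1 (k-1), ∫ x in ((j:ℝ) - 2⁻¹)..((j:ℝ) + 2⁻¹), f x :=
        Finset.sum_le_sum hterm
    _ = ∑ i ∈ range (k-1), (∫ x in (((i:ℝ) + 2⁻¹))..(((i+1:ℕ):ℝ) + 2⁻¹), f x) := by
        rw [← Finset.Ico_add_one_right_eq_Icc, show k - 1 + 1 = k from by omega,
          Finset.sum_Ico_eq_sum_range, show k - 1 = k - 1 from rfl]
        apply Finset.sum_congr rfl
        intro i _
        congr 1 <;> push_cast <;> ring
    _ = ∫ x in (2⁻¹:ℝ)..(((k-1:ℕ):ℝ) + 2⁻¹), f x := hadj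
    _ = ∫ x in (2⁻¹:ℝ)..((k:ℝ) - 2⁻¹), f x := by
        rw [hknat, show (k:ℝ) - 1 + 2⁻¹ = (k:ℝ) - 2⁻¹ by ring]
    _ ≤ ∫ x in (0:ℝ)..(k:ℝ), f x := by linarith

lemma int_eq_beta {K a : ℝ} (hK : 0 < K) :
    (∫ x in (0:ℝ)..K, x ^ (-a) * (K - x) ^ (-(1/2:ℝ)))
      = K ^ (1/2 - a : ℝ) * ∫ s in (0:ℝ)..1, s ^ (-(1/2:ℝ)) * (1 - s) ^ (-a) := by
  have h1 : (∫ u in (0:ℝ)..1, ((K*u) ^ (-a) * (K - K*u) ^ (-(1/2:ℝ))))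
      = K⁻¹ • ∫ x in (0:ℝ)..K, x ^ (-a) * (K - x) ^ (-(1/2:ℝ)) := by
    have := integral_comp_mul_left (a := (0:ℝ)) (b := (1:ℝ))
      (f := fun x => x ^ (-a) * (K - x) ^ (-(1/2:ℝ))) (c := K) hK.ne'
    simpa using this
  have h2 : (∫ u in (0:ℝ)..1, ((K*u) ^ (-a) * (K - K*u) ^ (-(1/2:ℝ))))
      = K ^ (-a - 1/2 : ℝ) * ∫ u in (0:ℝ)..1, u ^ (-a) * (1 - u) ^ (-(1/2:ℝ)) := by
    rw [← intervalIntegral.integral_const_mul]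
    apply integral_congr
    intro u hu
    rw [Set.uIcc_of_le (by norm_num : (0:ℝ) ≤ 1)] at hu
    dsimp only
    have hu0 : 0 ≤ u := hu.1
    have hu1 : 0 ≤ 1 - u := by linarith [hu.2]
    have e1 : (K*u) ^ (-a) = K ^ (-a) * u ^ (-a) := Real.mul_rpow hK.le hu0
    have e2 : (K - K*u) ^ (-(1/2:ℝ)) = K ^ (-(1/2:ℝ)) * (1-u) ^ (-(1/2:ℝ)) := by
      rw [show K - K*u = K * (1-u) by ring]
      exact Real.mul_rpow hK.le hu1
    rw [e1, e2, show K ^ (-a - 1/2 : ℝ) = K ^ (-a) * K ^ (-(1/2:ℝ)) by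
      rw [← Real.rpow_add hK]; ring_nf]
    ring
  have h3 : (∫ u in (0:ℝ)..1, u ^ (-a) * (1 - u) ^ (-(1/2:ℝ)))
      = ∫ s in (0:ℝ)..1, s ^ (-(1/2:ℝ)) * (1 - s) ^ (-a) := by
    have := integral_comp_sub_left (a := (0:ℝ)) (b := (1:ℝ))
      (fun s => s ^ (-(1/2:ℝ)) * (1 - s) ^ (-a)) 1
    simp only [sub_zero, sub_self] at this
    rw [← this]
    apply integral_congr
    intro u _
    simp only [sub_sub_cancel]
    ring
  rw [h2, h3, smul_eq_mul] at h1
  have hJ : (∫ x in (0:ℝ)..K, x ^ (-a) * (K - x) ^ (-(1/2:ℝ)))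
      = K * (K ^ (-a - 1/2 : ℝ) * ∫ s in (0:ℝ)..1, s ^ (-(1/2:ℝ)) * (1 - s) ^ (-a)) := by
    rw [h1, ← mul_assoc, mul_inv_cancel₀ hK.ne', one_mul]
  rw [hJ, ← mul_assoc]
  congr 1
  nth_rewrite 1 [← Real.rpow_one K]
  rw [← Real.rpow_add hK, show (1:ℝ) + (-a - 1/2) = 1/2 - a by ring]

/-- The weighted sum estimate `∑_{j=1}^k η_j φ_j j^{-γ/2} ≤ 2^{β/2-1} η₀^{1/2}(B(1/2,ζ)+2)(k+1)^{-β/2}`. -/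
theorem stmt17 (η0 α ν : ℝ) (hη0 : 0 < η0) (hη01 : η0 ≤ 1)
    (hα : α ∈ Set.Ioo (0 : ℝ) 1) (hν : ν ∈ Set.Ioo (0 : ℝ) (1 / 2))
    (k : ℕ) (hk : 1 ≤ k) :
    let η : ℕ → ℝ := fun j => η0 * (j : ℝ) ^ (-α)
    let γ : ℝ := min ((1 + 2 * ν) * (1 - α)) 1
    let β : ℝ := γ - (1 - α)
    let ζ : ℝ := 1 - α - γ / 2
    let φ : ℕ → ℝ := fun j =>
      if j < k then
        min ((2 * Real.exp 1) ^ (-(1 / 2 : ℝ)) * (∑ i ∈ Icc (j + 1) k, η i) ^ (-(1 / 2 : ℝ))) 1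
      else 1
    ∑ j ∈ Icc 1 k, η j * φ j * (j : ℝ) ^ (-(γ / 2))
      ≤ 2 ^ (β / 2 - 1) * η0 ^ (1 / 2 : ℝ) * (Beta (1 / 2) ζ + 2) * ((k : ℝ) + 1) ^ (-(β / 2)) := by
  intro η γ β ζ φ
  obtain ⟨hα0, hα1⟩ := hα
  obtain ⟨hν0, hν1⟩ := hν
  have hηd : ∀ j : ℕ, η j = η0 * (j : ℝ) ^ (-α) := fun _ => rfl
  have hγd : γ = min ((1 + 2 * ν) * (1 - α)) 1 := rfl
  have hβd : β = γ - (1 - α) := rfl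
  have hζd : ζ = 1 - α - γ / 2 := rfl
  have hφd : ∀ j : ℕ, φ j = if j < k then
      min ((2 * Real.exp 1) ^ (-(1 / 2 : ℝ)) * (∑ i ∈ Icc (j + 1) k, η i) ^ (-(1 / 2 : ℝ))) 1
      else 1 := fun _ => rfl
  set a : ℝ := α + γ / 2 with ha_def
  -- basic numeric facts
  have hγ1 : γ ≤ 1 := hγd ▸ min_le_right _ _
  have hγν : γ ≤ (1 + 2 * ν) * (1 - α) := hγd ▸ min_le_left _ _
  have hγgt : 1 - α < γ := by
    rw [hγd]
    apply lt_min (by nlinarith) (by linarith)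
  have hγpos : 0 < γ := by nlinarith
  have hγlt : γ < 2 * (1 - α) := lt_of_le_of_lt hγν (by nlinarith)
  have hβpos : 0 < β := by rw [hβd]; linarith
  have hapos : 0 < a := by rw [ha_def]; positivity
  have ha1 : a < 1 := by rw [ha_def]; linarith
  have hζa : ζ = 1 - a := by rw [hζd, ha_def]; ring
  have hβa : β / 2 ≤ a := by rw [hβd, ha_def]; linarith
  have hk1 : (1:ℝ) ≤ (k:ℝ) := by exact_mod_cast hk
  have hkpos : (0:ℝ) < (k:ℝ) := by linarith
  have hη0h : (0:ℝ) ≤ η0 ^ (1/2:ℝ) := Real.rpow_nonneg hη0.le _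
  -- Beta identification
  have hBeta : Beta (1/2) ζ = ∫ s in (0:ℝ)..1, s ^ (-(1/2:ℝ)) * (1 - s) ^ (-a) := by
    unfold Beta
    rw [show (1/2 - 1 : ℝ) = -(1/2:ℝ) by norm_num, show ζ - 1 = -a by rw [hζa]; ring]
  have hBnn : 0 ≤ Beta (1/2) ζ := by
    rw [hBeta]
    apply intervalIntegral.integral_nonneg (by norm_num)
    intro s hs
    exact mul_nonneg (Real.rpow_nonneg hs.1 _) (Real.rpow_nonneg (by linarith [hs.2]) _)
  -- split the sum
  set T : ℕ → ℝ := fun j => η j * φ j * (j:ℝ) ^ (-(γ/2)) with hT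
  have hsplit : ∑ j ∈ Icc 1 k, T j = (∑ j ∈ Icc 1 (k-1), T j) + T k := by
    have h := Finset.sum_Icc_succ_top (a := 1) (b := k-1) (by omega) T
    rwa [show k - 1 + 1 = k from by omega] at h
  -- termwise bound for j < k
  have hterm : ∀ j ∈ Icc 1 (k-1),
      T j ≤ 1/2 * η0 ^ (1/2:ℝ) * (k:ℝ) ^ (α/2)
        * ((j:ℝ) ^ (-a) * ((k:ℝ) - (j:ℝ)) ^ (-(1/2:ℝ))) := by
    intro j hj
    rw [Finset.mem_Icc] at hj
    have hjk : j < k := by omega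
    have hj1 : (1:ℝ) ≤ (j:ℝ) := by exact_mod_cast hj.1
    have hjpos : (0:ℝ) < (j:ℝ) := by linarith
    have hkj : (0:ℝ) < (k:ℝ) - (j:ℝ) := by
      have : j + 1 ≤ k := hjk
      have : (j:ℝ) + 1 ≤ (k:ℝ) := by exact_mod_cast this
      linarith
    -- lower bound on the inner sum
    set S : ℝ := ∑ i ∈ Icc (j + 1) k, η i with hS
    set M : ℝ := ((k:ℝ) - (j:ℝ)) * (η0 * (k:ℝ) ^ (-α)) with hM
    have hMpos : 0 < M := by
      apply mul_pos hkj (mul_pos hη0 (Real.rpow_pos_of_pos hkpos _))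
    have hMS : M ≤ S := by
      have hcard := Finset.card_nsmul_le_sum (Icc (j+1) k) η (η0 * (k:ℝ) ^ (-α)) ?_
      · rw [Nat.card_Icc, show k + 1 - (j+1) = k - j from by omega, nsmul_eq_mul] at hcard
        rw [hM, hS]
        have : ((k - j : ℕ) : ℝ) = (k:ℝ) - (j:ℝ) := by
          rw [Nat.cast_sub hjk.le]
        rw [← this]
        exact hcard
      · intro i hi
        rw [Finset.mem_Icc] at hi
        have hipos : (0:ℝ) < (i:ℝ) := by
          have : 1 ≤ i := by omega
          exact_mod_cast Nat.lt_of_lt_of_le Nat.zero_lt_one this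
        rw [hηd i]
        apply mul_le_mul_of_nonneg_left _ hη0.le
        exact Real.rpow_le_rpow_of_nonpos hipos (by exact_mod_cast hi.2) (by linarith)
    have hSpos : 0 < S := lt_of_lt_of_le hMpos hMS
    -- φ j bound
    have hφj : φ j ≤ 1/2 * M ^ (-(1/2:ℝ)) := by
      rw [hφd j, if_pos hjk]
      apply le_trans (min_le_left _ _)
      have h1 : (2 * Real.exp 1) ^ (-(1/2:ℝ)) ≤ 1/2 := by
        have he2 : (2:ℝ) ≤ Real.exp 1 := by
          have := Real.add_one_le_exp 1
          linarith
        have h4 : (2 * Real.exp 1) ^ (-(1/2:ℝ)) ≤ (4:ℝ) ^ (-(1/2:ℝ)) :=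
          Real.rpow_le_rpow_of_nonpos (by norm_num) (by linarith) (by norm_num)
        have h42 : (4:ℝ) ^ (-(1/2:ℝ)) = 1/2 := by
          rw [show (4:ℝ) = 2 ^ (2:ℝ) by
              rw [show (2:ℝ) ^ (2:ℝ) = 2 ^ (2:ℕ) from Real.rpow_natCast 2 2]; norm_num,
            ← Real.rpow_mul (by norm_num), show (2:ℝ) * (-(1/2:ℝ)) = -1 by norm_num]
          rw [Real.rpow_neg_one]
          norm_num
        linarith
      have h2 : S ^ (-(1/2:ℝ)) ≤ M ^ (-(1/2:ℝ)) :=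
        Real.rpow_le_rpow_of_nonpos hMpos hMS (by norm_num)
      apply mul_le_mul h1 h2 (Real.rpow_nonneg hSpos.le _) (by norm_num)
    -- expand M^{-1/2}
    have hMval : M ^ (-(1/2:ℝ))
        = ((k:ℝ) - (j:ℝ)) ^ (-(1/2:ℝ)) * η0 ^ (-(1/2:ℝ)) * (k:ℝ) ^ (α/2) := by
      rw [hM, Real.mul_rpow hkj.le (by positivity), Real.mul_rpow hη0.le (by positivity),
        ← Real.rpow_mul hkpos.le, show -α * (-(1/2:ℝ)) = α/2 by ring]
      ring
    -- assemble
    have hηφ : T j ≤ (η0 * (j:ℝ) ^ (-α)) * (1/2 * M ^ (-(1/2:ℝ))) * (j:ℝ) ^ (-(γ/2)) := by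
      rw [hT]
      dsimp only
      rw [hηd j]
      have hnn : (0:ℝ) ≤ η0 * (j:ℝ) ^ (-α) := by positivity
      apply mul_le_mul_of_nonneg_right (mul_le_mul_of_nonneg_left hφj hnn)
        (Real.rpow_nonneg hjpos.le _)
    have hjj : (j:ℝ) ^ (-α) * (j:ℝ) ^ (-(γ/2)) = (j:ℝ) ^ (-a) := by
      rw [← Real.rpow_add hjpos, ha_def]
      ring_nf
    have hη0half : η0 * η0 ^ (-(1/2:ℝ)) = η0 ^ (1/2:ℝ) := by
      nth_rewrite 1 [← Real.rpow_one η0]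
      rw [← Real.rpow_add hη0]
      norm_num
    refine le_trans hηφ (le_of_eq ?_)
    rw [hMval,
      show η0 * (j:ℝ) ^ (-α) * (1/2 * (((k:ℝ) - (j:ℝ)) ^ (-(1/2:ℝ)) * η0 ^ (-(1/2:ℝ)) * (k:ℝ) ^ (α/2))) * (j:ℝ) ^ (-(γ/2))
        = 1/2 * (η0 * η0 ^ (-(1/2:ℝ))) * (k:ℝ) ^ (α/2)
          * (((j:ℝ) ^ (-α) * (j:ℝ) ^ (-(γ/2))) * ((k:ℝ) - (j:ℝ)) ^ (-(1/2:ℝ))) from by ring,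
      hjj, hη0half]
  -- last term bound
  have hlast : T k ≤ η0 ^ (1/2:ℝ) * (k:ℝ) ^ (-(β/2)) := by
    rw [hT]
    dsimp only
    rw [hηd k, hφd k, if_neg (lt_irrefl k), mul_one]
    have h1 : η0 ≤ η0 ^ (1/2:ℝ) := by
      nth_rewrite 1 [← Real.rpow_one η0]
      exact Real.rpow_le_rpow_of_exponent_ge hη0 hη01 (by norm_num)
    have h2 : (k:ℝ) ^ (-α) * (k:ℝ) ^ (-(γ/2)) ≤ (k:ℝ) ^ (-(β/2)) := by
      rw [← Real.rpow_add hkpos]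
      apply Real.rpow_le_rpow_of_exponent_le hk1
      rw [hβd]
      linarith
    calc η0 * (k:ℝ) ^ (-α) * (k:ℝ) ^ (-(γ/2))
        = η0 * ((k:ℝ) ^ (-α) * (k:ℝ) ^ (-(γ/2))) := by ring
      _ ≤ η0 ^ (1/2:ℝ) * (k:ℝ) ^ (-(β/2)) := by
          apply mul_le_mul h1 h2 ?_ hη0h
          positivity
  -- sum bound via the integral
  have hsum : ∑ j ∈ Icc 1 (k-1), T j
      ≤ 1/2 * η0 ^ (1/2:ℝ) * (k:ℝ) ^ (α/2)
        * ∑ j ∈ Icc 1 (k-1), ((j:ℝ) ^ (-a) * ((k:ℝ) - (j:ℝ)) ^ (-(1/2:ℝ))) := by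
    rw [Finset.mul_sum]
    exact Finset.sum_le_sum hterm
  have hint := sum_le_int hk hapos ha1
  have hval := int_eq_beta (K := (k:ℝ)) (a := a) hkpos
  have hcnn : (0:ℝ) ≤ 1/2 * η0 ^ (1/2:ℝ) * (k:ℝ) ^ (α/2) := by
    apply mul_nonneg (mul_nonneg (by norm_num) hη0h) (Real.rpow_nonneg hkpos.le _)
  have hexp : (k:ℝ) ^ (α/2) * (k:ℝ) ^ (1/2 - a : ℝ) = (k:ℝ) ^ (-(β/2)) := by
    rw [← Real.rpow_add hkpos, show α/2 + (1/2 - a) = -(β/2) by rw [ha_def, hβd]; ring]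
  have hkk : (k:ℝ) ^ (-(β/2)) ≤ 2 ^ (β/2) * ((k:ℝ)+1) ^ (-(β/2)) := by
    rw [Real.rpow_neg hkpos.le, Real.rpow_neg (by positivity), ← Real.inv_rpow hkpos.le,
      ← Real.inv_rpow (by positivity), ← Real.mul_rpow (by norm_num) (by positivity)]
    apply Real.rpow_le_rpow (by positivity) ?_ (by linarith)
    rw [show (2:ℝ) * ((k:ℝ)+1)⁻¹ = 2 / ((k:ℝ)+1) by ring, inv_eq_one_div,
      div_le_div_iff₀ hkpos (by positivity)]
    linarith
  show (∑ j ∈ Icc 1 k, T j) ≤ _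
  calc ∑ j ∈ Icc 1 k, T j = (∑ j ∈ Icc 1 (k-1), T j) + T k := hsplit
    _ ≤ 1/2 * η0 ^ (1/2:ℝ) * (k:ℝ) ^ (α/2)
          * ∑ j ∈ Icc 1 (k-1), ((j:ℝ) ^ (-a) * ((k:ℝ) - (j:ℝ)) ^ (-(1/2:ℝ)))
        + η0 ^ (1/2:ℝ) * (k:ℝ) ^ (-(β/2)) := add_le_add hsum hlast
    _ ≤ 1/2 * η0 ^ (1/2:ℝ) * (k:ℝ) ^ (α/2)
          * ((k:ℝ) ^ (1/2 - a : ℝ) * ∫ s in (0:ℝ)..1, s ^ (-(1/2:ℝ)) * (1 - s) ^ (-a))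
        + η0 ^ (1/2:ℝ) * (k:ℝ) ^ (-(β/2)) := by
        apply add_le_add_left
        apply mul_le_mul_of_nonneg_left _ hcnn
        rw [← hval]
        exact hint
    _ = 1/2 * η0 ^ (1/2:ℝ) * ((k:ℝ) ^ (-(β/2)) * Beta (1/2) ζ)
        + η0 ^ (1/2:ℝ) * (k:ℝ) ^ (-(β/2)) := by
        rw [hBeta, ← hexp]
        ring
    _ ≤ 1/2 * η0 ^ (1/2:ℝ) * ((2 ^ (β/2) * ((k:ℝ)+1) ^ (-(β/2))) * Beta (1/2) ζ)
        + η0 ^ (1/2:ℝ) * (2 ^ (β/2) * ((k:ℝ)+1) ^ (-(β/2))) := by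
        apply add_le_add
        · apply mul_le_mul_of_nonneg_left (mul_le_mul_of_nonneg_right hkk hBnn)
            (mul_nonneg (by norm_num) hη0h)
        · exact mul_le_mul_of_nonneg_left hkk hη0h
    _ = 2 ^ (β/2 - 1) * η0 ^ (1/2:ℝ) * (Beta (1/2) ζ + 2) * ((k:ℝ)+1) ^ (-(β/2)) := by
        rw [Real.rpow_sub (by norm_num : (0:ℝ) < 2), Real.rpow_one]
        ring
end
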